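/- arXiv:1502.02747 — 3 statements merged into one kernel-verified Lean document; each statement's English description precedes it below -/
import Mathlib

section
/- Let γ ∈ (0,1), x_A > 0, and T = (x_T,y_T), and set d = √((x_A−x_T)²+y_T²). The positive root of the quadratic 4γ²x_A²α² + 4γx_A d α + (1−γ²)d² − 4γ²x_Ax_T = 0 is ᾱ = (γ·√((x_A+x_T)²+y_T²) − √((x_A−x_T)²+y_T²)) / (2γx_A), provided γ·√((x_A+x_T)²+y_T²) > √((x_A−x_T)²+y_T²). -/
/-!
Completing the square, the quadratic is `(2γx_Aα + d)² - γ²(d² + 4x_Ax_T)`, and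
`d² + 4x_Ax_T = (x_A + x_T)² + y_T²` is the squared distance from `T` to the Defender.
So its roots satisfy `2γx_Aα + d = ±γ·dist(T, D)`, and the `+` root is positive exactly
when `T` lies inside the Apollonius circle.
-/

lemma sq_sqrt_add_sq_sub_sq_sqrt_sub_sq (a b c : ℝ) :
    Real.sqrt ((a + b)^2 + c^2)^2 - Real.sqrt ((a - b)^2 + c^2)^2 = 4*a*b := by
  rw [Real.sq_sqrt (by positivity), Real.sq_sqrt (by positivity)]
  ring

lemma quadratic_eq_zero_of_completed_square {γ a b s d α : ℝ} (hγa : γ * a ≠ 0)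
    (hsd : s^2 - d^2 = 4*a*b) (hα : α = (γ*s - d) / (2*γ*a)) :
    4*γ^2*a^2*α^2 + 4*γ*a*d*α + (1 - γ^2)*d^2 - 4*γ^2*a*b = 0 := by
  have hroot : 2*γ*a*α + d = γ*s := by
    rw [hα, mul_div_cancel₀ _ (by simpa [mul_assoc] using hγa)]
    ring
  linear_combination (2*γ*a*α + d + γ*s) * hroot + γ^2 * hsd

theorem stmt4_general (γ xA xT yT : ℝ) (hγ0 : 0 < γ) (hxA : 0 < xA)
    (d : ℝ) (hd : d = Real.sqrt ((xA - xT)^2 + yT^2))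
    (hin : γ * Real.sqrt ((xA + xT)^2 + yT^2) > Real.sqrt ((xA - xT)^2 + yT^2)) :
    let αbar := (γ * Real.sqrt ((xA + xT)^2 + yT^2)
        - Real.sqrt ((xA - xT)^2 + yT^2)) / (2*γ*xA)
    4*γ^2*xA^2*αbar^2 + 4*γ*xA*d*αbar + (1 - γ^2)*d^2 - 4*γ^2*xA*xT = 0
      ∧ 0 < αbar := by
  intro αbar
  subst hd
  refine ⟨quadratic_eq_zero_of_completed_square (by positivity)
    (sq_sqrt_add_sq_sub_sq_sqrt_sub_sq xA xT yT) rfl, ?_⟩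
  exact div_pos (sub_pos.mpr hin) (by positivity)

/-- The critical speed ratio ᾱ is the positive root of the quadratic
4γ²x_A²α² + 4γx_A d α + (1-γ²)d² - 4γ²x_A x_T = 0. -/
theorem stmt4 (γ xA xT yT : ℝ) (hγ0 : 0 < γ) (hγ1 : γ < 1) (hxA : 0 < xA)
    (d : ℝ) (hd : d = Real.sqrt ((xA - xT)^2 + yT^2))
    (hin : γ * Real.sqrt ((xA + xT)^2 + yT^2) > Real.sqrt ((xA - xT)^2 + yT^2)) :
    let αbar := (γ * Real.sqrt ((xA + xT)^2 + yT^2)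
        - Real.sqrt ((xA - xT)^2 + yT^2)) / (2*γ*xA)
    4*γ^2*xA^2*αbar^2 + 4*γ*xA*d*αbar + (1 - γ^2)*d^2 - 4*γ^2*xA*xT = 0
      ∧ 0 < αbar :=
  stmt4_general γ xA xT yT hγ0 hxA d hd hin
end

section
/- Let T = (x_T, y_T) lie strictly inside the DA Apollonius circle with center (a,0) and radius r_A (where a,r_A are as determined by γ and x_A with 0<γ<1, x_A>0), and let α > ᾱ where ᾱ = (γ√((x_A+x_T)²+y_T²) − √((x_A−x_T)²+y_T²))/(2γx_A) > 0. Then the AT Apollonius circle with center O = ((x_T − α²x_A)/(1−α²), y_T/(1−α²)) and radius r_O = (α/(1−α²))d, d = dist(A,T), intersects the exterior of the DA Apollonius circle, i.e., dist((a,0),O) + r_O > r_A. -/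
/-!
Clearing denominators, the squared distance of the two centres minus `(r_A - r_O)²` equals
`((2γ x_A α + d)² - γ² |TD|²) / ((1 - α²)(1 - γ²))`, with `d = |AT|`.  By the definition of `ᾱ`,
`γ |TD| = 2γ x_A ᾱ + d`, so `α > ᾱ` makes the numerator positive, and the distance of the
centres exceeds `r_A - r_O`.
-/

lemma apollonius_centerDist_sq_sub_radiusDiff_sq {γ α xA xT yT d : ℝ}
    (hα : 1 - α ^ 2 ≠ 0) (hγ : 1 - γ ^ 2 ≠ 0) (hd : d ^ 2 = (xA - xT) ^ 2 + yT ^ 2) :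
    ((1 + γ ^ 2) / (1 - γ ^ 2) * xA - (xT - α ^ 2 * xA) / (1 - α ^ 2)) ^ 2
        + (yT / (1 - α ^ 2)) ^ 2 - (2 * γ / (1 - γ ^ 2) * xA - α / (1 - α ^ 2) * d) ^ 2
      = ((2 * γ * xA * α + d) ^ 2 - γ ^ 2 * ((xA + xT) ^ 2 + yT ^ 2))
          / ((1 - α ^ 2) * (1 - γ ^ 2)) := by
  field_simp
  linear_combination (-(1 - γ ^ 2) * (1 - α ^ 2 * γ ^ 2)) * hd

theorem stmt7_general (γ xA xT yT α : ℝ) (hγ0 : 0 < γ) (hγ1 : γ < 1) (hxA : 0 < xA)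
    (a rA : ℝ) (ha : a = ((1 + γ^2)/(1 - γ^2)) * xA)
    (hrA : rA = (2*γ/(1 - γ^2)) * xA)
    (αbar : ℝ)
    (hαbar : αbar = (γ * Real.sqrt ((xA + xT)^2 + yT^2)
        - Real.sqrt ((xA - xT)^2 + yT^2)) / (2*γ*xA))
    (hαbar0 : 0 < αbar) (hα : αbar < α) (hα1 : α < 1)
    (d : ℝ) (hd : d = Real.sqrt ((xA - xT)^2 + yT^2))
    (xO yO rO : ℝ)
    (hxO : xO = (xT - α^2*xA)/(1 - α^2)) (hyO : yO = yT/(1 - α^2))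
    (hrO : rO = (α/(1 - α^2)) * d) :
    Real.sqrt ((a - xO)^2 + yO^2) + rO > rA := by
  subst ha hrA hxO hyO hrO
  have hβ : 0 < 1 - α ^ 2 := by nlinarith
  have hκ : 0 < 1 - γ ^ 2 := by nlinarith
  have hmargin : γ * √((xA + xT) ^ 2 + yT ^ 2) < 2 * γ * xA * α + d := by
    rw [hαbar, div_lt_iff₀ (by positivity), ← hd] at hα
    linarith
  have hnum : γ ^ 2 * ((xA + xT) ^ 2 + yT ^ 2) < (2 * γ * xA * α + d) ^ 2 := by
    calc γ ^ 2 * ((xA + xT) ^ 2 + yT ^ 2) = (γ * √((xA + xT) ^ 2 + yT ^ 2)) ^ 2 := by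
          rw [mul_pow, Real.sq_sqrt (by positivity)]
      _ < (2 * γ * xA * α + d) ^ 2 := by gcongr
  have hgap := apollonius_centerDist_sq_sub_radiusDiff_sq (α := α) (xA := xA) (xT := xT)
    (yT := yT) hβ.ne' hκ.ne' (hd ▸ Real.sq_sqrt (by positivity))
  have hsq := div_pos (sub_pos.2 hnum) (mul_pos hβ hκ)
  rw [← hgap, sub_pos] at hsq
  linarith [Real.lt_sqrt_of_sq_lt hsq]

/-- If T is strictly inside the DA Apollonius circle and α > ᾱ, then the AT
Apollonius circle intersects the exterior of the DA circle:
dist((a,0),O) + r_O > r_A. -/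
theorem stmt7 (γ xA xT yT α : ℝ) (hγ0 : 0 < γ) (hγ1 : γ < 1) (hxA : 0 < xA)
    (a rA : ℝ) (ha : a = ((1 + γ^2)/(1 - γ^2)) * xA)
    (hrA : rA = (2*γ/(1 - γ^2)) * xA)
    (hinside : Real.sqrt ((xT - a)^2 + yT^2) < rA)
    (αbar : ℝ)
    (hαbar : αbar = (γ * Real.sqrt ((xA + xT)^2 + yT^2)
        - Real.sqrt ((xA - xT)^2 + yT^2)) / (2*γ*xA))
    (hαbar0 : 0 < αbar) (hα : αbar < α) (hα1 : α < 1)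
    (d : ℝ) (hd : d = Real.sqrt ((xA - xT)^2 + yT^2))
    (xO yO rO : ℝ)
    (hxO : xO = (xT - α^2*xA)/(1 - α^2)) (hyO : yO = yT/(1 - α^2))
    (hrO : rO = (α/(1 - α^2)) * d) :
    Real.sqrt ((a - xO)^2 + yO^2) + rO > rA :=
  stmt7_general γ xA xT yT α hγ0 hγ1 hxA a rA ha hrA αbar hαbar hαbar0 hα hα1 d hd xO yO rO hxO hyO
    hrO
end

section
/- At α = ᾱ = (γ√((x_A+x_T)²+y_T²) − d)/(2γx_A) with d = √((x_A−x_T)²+y_T²), and assuming 0 < ᾱ < 1, the AT Apollonius circle is internally tangent to the DA Apollonius circle: dist((a,0), O) = r_A − r_O, where O = ((x_T − ᾱ²x_A)/(1−ᾱ²), y_T/(1−ᾱ²)), r_O = (ᾱ/(1−ᾱ²))d, a = ((1+γ²)/(1−γ²))x_A, r_A = (2γ/(1−γ²))x_A. -/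
/-!
Both circles are Apollonius circles: the DA circle `{X | ‖X - A‖ = γ ‖X - D‖}` and the AT circle
`{X | ‖X - T‖ = α ‖X - A‖}`. The power of a point `X` with respect to the Apollonius circle of
`(P, Q, k)` is `(‖X - P‖² - k² ‖X - Q‖²) / (1 - k²)`. Evaluating it at the DA center `C₁` and at `T`,
and using `‖A - C₁‖ = γ r₁`, expresses `‖C₁ - C₂‖² - (r₁ - r₂)²` as a multiple of
`(2 α γ x_A + ‖T - A‖)² - γ² ‖T - D‖²`, which vanishes exactly at `α = ᾱ`. The sign `r₂ ≤ r₁` holds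
since otherwise `A` would lie strictly inside the AT circle (at distance at most
`γ r₁ + (r₂ - r₁) < r₂` from `C₂`), whereas its power `‖A - T‖² / (1 - α²)` is nonnegative.
-/

section Apollonius

variable {E : Type*} [NormedAddCommGroup E] [InnerProductSpace ℝ E]

/-- For `0 ≤ k ≠ 1`, the locus `{X | dist X P = k * dist X Q}` is the circle with this center and
radius `|apolloniusRadius P Q k|`. -/
noncomputable def apolloniusCenter (P Q : E) (k : ℝ) : E := (1 - k ^ 2)⁻¹ • (P - k ^ 2 • Q)

noncomputable def apolloniusRadius (P Q : E) (k : ℝ) : ℝ := k * dist P Q / (1 - k ^ 2)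

variable {k γ α : ℝ}

theorem dist_apolloniusCenter_sq_sub_sq (P Q X : E) (hk : k ^ 2 ≠ 1) :
    dist X (apolloniusCenter P Q k) ^ 2 - apolloniusRadius P Q k ^ 2 =
      (dist X P ^ 2 - k ^ 2 * dist X Q ^ 2) / (1 - k ^ 2) := by
  have hk' : 1 - k ^ 2 ≠ 0 := sub_ne_zero.mpr (Ne.symm hk)
  have hcenter : X - apolloniusCenter P Q k = (1 - k ^ 2)⁻¹ • ((X - P) - k ^ 2 • (X - Q)) := by
    rw [eq_inv_smul_iff₀ hk', apolloniusCenter, smul_sub, smul_inv_smul₀ hk']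
    module
  have hPQ : P - Q = (X - Q) - (X - P) := by abel
  rw [dist_eq_norm, dist_eq_norm, dist_eq_norm, hcenter, apolloniusRadius, dist_eq_norm, hPQ]
  generalize X - P = u, X - Q = w
  simp only [norm_smul, div_pow, mul_pow, norm_sub_sq_real, real_inner_smul_right, norm_inv,
    Real.norm_eq_abs, inv_pow, sq_abs, real_inner_comm u w]
  field_simp
  ring

theorem dist_left_apolloniusCenter_sq (P Q : E) (hk : k ^ 2 ≠ 1) :
    dist P (apolloniusCenter P Q k) ^ 2 = k ^ 2 * apolloniusRadius P Q k ^ 2 := by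
  have hk' : 1 - k ^ 2 ≠ 0 := sub_ne_zero.mpr (Ne.symm hk)
  have hpow := dist_apolloniusCenter_sq_sub_sq P Q P hk
  rw [dist_self, apolloniusRadius] at hpow
  rw [apolloniusRadius]
  field_simp at hpow ⊢
  linear_combination hpow

theorem dist_apolloniusCenter_apolloniusCenter_sq_sub_sq (A D T : E) (hγ : γ ^ 2 ≠ 1)
    (hα : α ^ 2 ≠ 1) :
    dist (apolloniusCenter A D γ) (apolloniusCenter T A α) ^ 2 -
        (apolloniusRadius A D γ - apolloniusRadius T A α) ^ 2 =
      ((α * γ * dist A D + dist T A) ^ 2 - γ ^ 2 * dist T D ^ 2) / ((1 - α ^ 2) * (1 - γ ^ 2)) := by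
  have hγ' : 1 - γ ^ 2 ≠ 0 := sub_ne_zero.mpr (Ne.symm hγ)
  have hα' : 1 - α ^ 2 ≠ 0 := sub_ne_zero.mpr (Ne.symm hα)
  have hC₁ := dist_apolloniusCenter_sq_sub_sq T A (apolloniusCenter A D γ) hα
  have hT := dist_apolloniusCenter_sq_sub_sq A D T hγ
  rw [dist_comm _ T, dist_comm _ A, dist_left_apolloniusCenter_sq A D hγ] at hC₁
  rw [eq_add_of_sub_eq hC₁, eq_add_of_sub_eq hT, apolloniusRadius, apolloniusRadius]
  field_simp
  ring

theorem apolloniusRadius_le_of_dist_apolloniusCenter_sq (A D T : E) (hγ0 : 0 < γ) (hγ1 : γ < 1)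
    (hAD : A ≠ D) (hα : α ^ 2 < 1)
    (h : dist (apolloniusCenter A D γ) (apolloniusCenter T A α) ^ 2 =
      (apolloniusRadius A D γ - apolloniusRadius T A α) ^ 2) :
    apolloniusRadius T A α ≤ apolloniusRadius A D γ := by
  set r₁ := apolloniusRadius A D γ
  set r₂ := apolloniusRadius T A α
  by_contra! hlt
  have hr₁ : 0 < r₁ := div_pos (mul_pos hγ0 (dist_pos.mpr hAD)) (by nlinarith)
  have hC : dist (apolloniusCenter A D γ) (apolloniusCenter T A α) = r₂ - r₁ :=
    (pow_left_inj₀ dist_nonneg (by linarith) two_ne_zero).mp (by rw [h]; ring)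
  have hA : dist A (apolloniusCenter A D γ) = γ * r₁ :=
    (pow_left_inj₀ dist_nonneg (by positivity) two_ne_zero).mp
      (by rw [dist_left_apolloniusCenter_sq A D (by nlinarith : γ ^ 2 < 1).ne, mul_pow])
  have hA_inside : dist A (apolloniusCenter T A α) < r₂ :=
    calc dist A (apolloniusCenter T A α)
        ≤ dist A (apolloniusCenter A D γ) + dist (apolloniusCenter A D γ) (apolloniusCenter T A α) :=
          dist_triangle _ _ _
      _ = γ * r₁ + (r₂ - r₁) := by rw [hA, hC]
      _ < r₂ := by nlinarith
  have hpow := dist_apolloniusCenter_sq_sub_sq T A A hα.ne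
  rw [dist_self, zero_pow two_ne_zero, mul_zero, sub_zero] at hpow
  have : 0 ≤ dist A T ^ 2 / (1 - α ^ 2) := div_nonneg (sq_nonneg _) (by linarith)
  nlinarith [dist_nonneg (x := A) (y := apolloniusCenter T A α)]

theorem dist_apolloniusCenter_eq_apolloniusRadius_sub (A D T : E) (hγ0 : 0 < γ) (hγ1 : γ < 1)
    (hAD : A ≠ D) (hα : α ^ 2 < 1) (hcrit : α * γ * dist A D + dist T A = γ * dist T D) :
    dist (apolloniusCenter A D γ) (apolloniusCenter T A α) =
      apolloniusRadius A D γ - apolloniusRadius T A α := by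
  have hsq : dist (apolloniusCenter A D γ) (apolloniusCenter T A α) ^ 2 =
      (apolloniusRadius A D γ - apolloniusRadius T A α) ^ 2 := by
    rw [← sub_eq_zero, dist_apolloniusCenter_apolloniusCenter_sq_sub_sq A D T
      (by nlinarith : γ ^ 2 < 1).ne hα.ne, hcrit, mul_pow, sub_self, zero_div]
  have hle := apolloniusRadius_le_of_dist_apolloniusCenter_sq A D T hγ0 hγ1 hAD hα hsq
  exact (pow_left_inj₀ dist_nonneg (sub_nonneg.mpr hle) two_ne_zero).mp hsq

end Apollonius

theorem re_apolloniusCenter (P Q : ℂ) (k : ℝ) :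
    (apolloniusCenter P Q k).re = (P.re - k ^ 2 * Q.re) / (1 - k ^ 2) := by
  simp only [apolloniusCenter, Complex.smul_re, Complex.sub_re, smul_eq_mul, div_eq_inv_mul]

theorem im_apolloniusCenter (P Q : ℂ) (k : ℝ) :
    (apolloniusCenter P Q k).im = (P.im - k ^ 2 * Q.im) / (1 - k ^ 2) := by
  simp only [apolloniusCenter, Complex.smul_im, Complex.sub_im, smul_eq_mul, div_eq_inv_mul]

/-- At the critical speed ratio ᾱ, the AT Apollonius circle is internally
tangent to the DA Apollonius circle: dist((a,0),O) = r_A - r_O. -/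
theorem stmt8 (γ xA xT yT : ℝ) (hγ0 : 0 < γ) (hγ1 : γ < 1) (hxA : 0 < xA)
    (d : ℝ) (hd : d = Real.sqrt ((xA - xT)^2 + yT^2))
    (αbar : ℝ)
    (hαbar : αbar = (γ * Real.sqrt ((xA + xT)^2 + yT^2) - d) / (2*γ*xA))
    (hαbar0 : 0 < αbar) (hαbar1 : αbar < 1)
    (a rA xO yO rO : ℝ)
    (ha : a = ((1 + γ^2)/(1 - γ^2)) * xA)
    (hrA : rA = (2*γ/(1 - γ^2)) * xA)
    (hxO : xO = (xT - αbar^2*xA)/(1 - αbar^2)) (hyO : yO = yT/(1 - αbar^2))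
    (hrO : rO = (αbar/(1 - αbar^2)) * d) :
    Real.sqrt ((a - xO)^2 + yO^2) = rA - rO := by
  set A : ℂ := (xA : ℂ)
  set D : ℂ := ((-xA : ℝ) : ℂ)
  set T : ℂ := ⟨xT, yT⟩
  have hAD : dist A D = 2 * xA := by
    rw [Complex.dist_of_im_eq (by simp [A, D]), Real.dist_eq]
    simp only [A, D, Complex.ofReal_re]
    rw [sub_neg_eq_add, ← two_mul, abs_of_pos (by positivity)]
  have hTA : dist T A = d := by
    rw [hd, Complex.dist_eq_re_im]
    congr 1
    simp [T, A]
    ring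
  have hTD : dist T D = Real.sqrt ((xA + xT)^2 + yT^2) := by
    rw [Complex.dist_eq_re_im]
    congr 1
    simp [T, D]
    ring
  have hC₁ : apolloniusCenter A D γ = a := by
    apply Complex.ext
    · rw [re_apolloniusCenter]
      simp only [A, D, Complex.ofReal_re, ha]
      field_simp
      ring
    · simp [im_apolloniusCenter, A, D]
  have hC₂ : apolloniusCenter T A αbar = ⟨xO, yO⟩ := by
    apply Complex.ext
    · simp [re_apolloniusCenter, A, T, hxO]
    · simp [im_apolloniusCenter, A, T, hyO]
  have hr₁ : apolloniusRadius A D γ = rA := by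
    rw [apolloniusRadius, hAD, hrA]
    ring
  have hr₂ : apolloniusRadius T A αbar = rO := by
    rw [apolloniusRadius, hTA, hrO]
    ring
  have hcrit : αbar * γ * dist A D + dist T A = γ * dist T D := by
    rw [hAD, hTA, hTD, hαbar]
    field_simp
    ring
  have hdist : Real.sqrt ((a - xO)^2 + yO^2) = dist (a : ℂ) ⟨xO, yO⟩ := by
    simp [Complex.dist_eq_re_im]
  rw [hdist, ← hC₁, ← hC₂, ← hr₁, ← hr₂]
  exact dist_apolloniusCenter_eq_apolloniusRadius_sub A D T hγ0 hγ1
    (by rw [← dist_pos, hAD]; positivity) (by nlinarith) hcrit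
end
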